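/- In the setting of the fake Brownian motion construction (f_t the N(0,t) density, a(t) = K²t, 0 < c < K < 1), the Dupire local volatility η defined by η(t,y)² = (f_t(y) − cK² f_{K²t}(y))/(f_t(y) − c f_{K²t}(y)) satisfies 1 ≤ η(t,y)² ≤ K/(K−c) for all t > 0 and y ∈ ℝ. -/
import Mathlib


open Real

/-- The centered Gaussian density with variance `t`. -/
noncomputable def gaussDensity (t y : ℝ) : ℝ :=
  Real.exp (-(y ^ 2) / (2 * t)) / Real.sqrt (2 * Real.pi * t)

lemma gaussDensity_pos {t : ℝ} (ht : 0 < t) (y : ℝ) : 0 < gaussDensity t y := by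
  unfold gaussDensity
  have h2 : 0 < 2 * Real.pi * t := by positivity
  exact div_pos (Real.exp_pos _) (Real.sqrt_pos.mpr h2)

lemma key_ineq {K t : ℝ} (hK0 : 0 < K) (hK : K < 1) (ht : 0 < t) (y : ℝ) :
    K * gaussDensity (K ^ 2 * t) y ≤ gaussDensity t y := by
  unfold gaussDensity
  have hs : Real.sqrt (2 * Real.pi * (K ^ 2 * t)) = K * Real.sqrt (2 * Real.pi * t) := by
    rw [show 2 * Real.pi * (K ^ 2 * t) = K ^ 2 * (2 * Real.pi * t) by ring,
      Real.sqrt_mul (sq_nonneg K), Real.sqrt_sq hK0.le]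
  rw [hs]
  have hspos : 0 < Real.sqrt (2 * Real.pi * t) := Real.sqrt_pos.mpr (by positivity)
  have hexp : Real.exp (-(y ^ 2) / (2 * (K ^ 2 * t))) ≤ Real.exp (-(y ^ 2) / (2 * t)) := by
    apply Real.exp_le_exp.mpr
    rw [div_le_div_iff₀ (by positivity) (by positivity)]
    nlinarith [mul_nonneg (mul_nonneg (sq_nonneg y) ht.le)
      (by nlinarith : (0:ℝ) ≤ 1 - K ^ 2)]
  have h1 : K * (Real.exp (-(y ^ 2) / (2 * (K ^ 2 * t))) / (K * Real.sqrt (2 * Real.pi * t)))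
      = Real.exp (-(y ^ 2) / (2 * (K ^ 2 * t))) / Real.sqrt (2 * Real.pi * t) := by
    field_simp
  rw [h1]
  gcongr

/-- Bounds on the Dupire local volatility for the fake Brownian motion construction. -/
theorem fakeBM_eta_sq_bounds {c K : ℝ} (hc : 0 < c) (hcK : c < K) (hK : K < 1) :
    ∀ t > (0 : ℝ), ∀ y : ℝ,
      1 ≤ (gaussDensity t y - c * K ^ 2 * gaussDensity (K ^ 2 * t) y) /
            (gaussDensity t y - c * gaussDensity (K ^ 2 * t) y) ∧
      (gaussDensity t y - c * K ^ 2 * gaussDensity (K ^ 2 * t) y) /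
            (gaussDensity t y - c * gaussDensity (K ^ 2 * t) y) ≤ K / (K - c) := by
  intro t ht y
  have hK0 : 0 < K := hc.trans hcK
  set f := gaussDensity t y with hf
  set g := gaussDensity (K ^ 2 * t) y with hg
  have hgpos : 0 < g := gaussDensity_pos (by positivity) y
  have hkey : K * g ≤ f := key_ineq hK0 hK ht y
  have hden : 0 < f - c * g := by nlinarith
  constructor
  · rw [le_div_iff₀ hden]
    nlinarith [mul_nonneg (mul_pos hc hgpos).le (by nlinarith : (0:ℝ) ≤ 1 - K ^ 2)]
  · rw [div_le_div_iff₀ hden (by linarith : (0:ℝ) < K - c)]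
    nlinarith [mul_le_mul_of_nonneg_left hkey hc.le, mul_pos hc hgpos,
      mul_pos (mul_pos hc hgpos) hK0, mul_pos (mul_pos (mul_pos hc hgpos) hK0) hK0]
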